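/- If x ∈ ℝ^n is ε-monotone, meaning x_i ≤ x_j + ε for all 1 ≤ i ≤ j ≤ n, then ‖x − iso(x)‖_∞ ≤ ε, where iso(x) is the Euclidean projection of x onto the monotone cone. -/

import Mathlib

open MeasureTheory Filter ProbabilityTheory

noncomputable section

/-- The isotonic (monotone nondecreasing) cone in `ℝ^n` with the Euclidean norm. -/
def monoCone (n : ℕ) : Set (EuclideanSpace ℝ (Fin n)) :=
  {v | ∀ i j : Fin n, i ≤ j → v i ≤ v j}

open Classical in
/-- Euclidean projection onto the monotone cone (chosen minimizer of the distance). -/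
def isoProj {n : ℕ} (x : EuclideanSpace ℝ (Fin n)) : EuclideanSpace ℝ (Fin n) :=
  if h : ∃ z ∈ monoCone n, ∀ w ∈ monoCone n, dist x z ≤ dist x w then h.choose else x

/-- The map `A_i` replacing entries `i` and `i+1` (0-based) by their common average. -/
def avgMap {n : ℕ} (i : ℕ) (x : EuclideanSpace ℝ (Fin n)) : EuclideanSpace ℝ (Fin n) :=
  WithLp.toLp 2 fun j => if h : i + 1 < n then
      (if (j : ℕ) = i ∨ (j : ℕ) = i + 1
        then (x ⟨i, by omega⟩ + x ⟨i + 1, h⟩) / 2 else x j)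
    else x j

/-- One step of neighbor pooling: average entries `i`, `i+1` if they violate monotonicity. -/
def isoStep {n : ℕ} (i : ℕ) (x : EuclideanSpace ℝ (Fin n)) : EuclideanSpace ℝ (Fin n) :=
  if h : i + 1 < n then
    (if x ⟨i, by omega⟩ ≤ x ⟨i + 1, h⟩ then x else avgMap i x)
  else x

/-- Nonincreasing under neighbor averaging. -/
def NUNA {n : ℕ} (N : Seminorm ℝ (EuclideanSpace ℝ (Fin n))) : Prop :=
  ∀ x : EuclideanSpace ℝ (Fin n), ∀ i : ℕ, i + 1 < n → N (avgMap i x) ≤ N x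

/-- Average of the `m` entries of `x` starting at (0-based) index `a`. -/
def wavg {n : ℕ} (x : EuclideanSpace ℝ (Fin n)) (a m : ℕ) : ℝ :=
  (∑ t ∈ Finset.range m, if h : a + t < n then x ⟨a + t, h⟩ else 0) / m

/-- The sliding window seminorm with weight function `ψ`. -/
def swNorm {n : ℕ} (ψ : ℕ → ℝ) (x : EuclideanSpace ℝ (Fin n)) : ℝ :=
  sSup {r | ∃ a m : ℕ, 1 ≤ m ∧ a + m ≤ n ∧ r = |wavg x a m| * ψ m}

/-!
Let `p = iso(x)` and look at the block `{j | p j = p i}`. Raising `p` by a small `t > 0` on the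
part of the block at or to the right of `i` keeps it monotone, so the variational inequality of
the projection onto the convex cone gives `∑ (x j - p j) ≤ 0` over that part; hence some `j ≥ i`
in the block has `x j ≤ p j = p i`, and `x i ≤ x j + ε ≤ p i + ε`. Lowering the part to the left
of `i` gives `p i - ε ≤ x i` in the same way.
-/

open scoped RealInnerProductSpace Topology

section NearestPoint

variable {F : Type*} [NormedAddCommGroup F] [InnerProductSpace ℝ F] {K : Set F}

theorem inner_sub_le_zero_of_add_smul_mem (hK : Convex ℝ K) {x p c : F} (hp : p ∈ K)
    (hmin : ∀ w ∈ K, dist x p ≤ dist x w) {t : ℝ} (ht : 0 < t) (hc : p + t • c ∈ K) :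
    ⟪x - p, c⟫ ≤ 0 := by
  have : Nonempty K := ⟨⟨p, hp⟩⟩
  have hinf : ‖x - p‖ = ⨅ w : K, ‖x - w‖ :=
    le_antisymm (le_ciInf fun w => by simpa only [dist_eq_norm] using hmin w w.2)
      (ciInf_le ⟨0, by rintro _ ⟨w, rfl⟩; exact norm_nonneg _⟩ (⟨p, hp⟩ : K))
  have h := (norm_eq_iInf_iff_real_inner_le_zero hK hp).1 hinf _ hc
  rw [add_sub_cancel_left, inner_smul_right] at h
  exact nonpos_of_mul_nonpos_right h ht

end NearestPoint

theorem eventually_monotone_add_smul {ι : Type*} [Finite ι] [Preorder ι] {p c : ι → ℝ}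
    (hp : Monotone p) (hc : ∀ a b, a ≤ b → p a = p b → c a ≤ c b) :
    ∀ᶠ t in 𝓝[>] (0 : ℝ), Monotone (p + t • c) := by
  have hpair (a b : ι) : ∀ᶠ t in 𝓝[>] (0 : ℝ), a ≤ b → p a + t * c a ≤ p b + t * c b := by
    by_cases hab : a ≤ b
    · rcases (hp hab).eq_or_lt with heq | hlt
      · filter_upwards [self_mem_nhdsWithin] with t (ht : 0 < t) _
        rw [heq]
        gcongr
        exact hc a b hab heq
      · have : ∀ᶠ t in 𝓝 (0 : ℝ), p a + t * c a < p b + t * c b :=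
          ContinuousAt.eventually_lt (by fun_prop) (by fun_prop) (by simpa using hlt)
        exact (this.filter_mono nhdsWithin_le_nhds).mono fun _ h _ => h.le
    · exact .of_forall fun _ h => absurd h hab
  filter_upwards [eventually_all.2 fun a => eventually_all.2 (hpair a)] with t ht a b hab
  exact ht a b hab

theorem convex_monoCone (n : ℕ) : Convex ℝ (monoCone n) := by
  intro v hv w hw s r hs hr _ i j hij
  simp only [PiLp.add_apply, PiLp.smul_apply, smul_eq_mul]
  gcongr
  exacts [hv i j hij, hw i j hij]

theorem isClosed_monoCone (n : ℕ) : IsClosed (monoCone n) := by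
  simp only [monoCone, Set.ofPred_forall]
  exact isClosed_iInter fun i => isClosed_iInter fun j => isClosed_iInter fun _ =>
    isClosed_le (EuclideanSpace.proj i).continuous (EuclideanSpace.proj j).continuous

theorem exists_nearest_mem_monoCone (n : ℕ) (x : EuclideanSpace ℝ (Fin n)) :
    ∃ z ∈ monoCone n, ∀ w ∈ monoCone n, dist x z ≤ dist x w := by
  obtain ⟨y, hy, hyd⟩ := (isClosed_monoCone n).exists_infDist_eq_dist ⟨0, fun _ _ _ => le_rfl⟩ x
  exact ⟨y, hy, fun w hw => hyd ▸ Metric.infDist_le_dist_of_mem hw⟩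

theorem isoProj_spec {n : ℕ} (x : EuclideanSpace ℝ (Fin n)) :
    isoProj x ∈ monoCone n ∧ ∀ w ∈ monoCone n, dist x (isoProj x) ≤ dist x w := by
  rw [isoProj, dif_pos (exists_nearest_mem_monoCone n x)]
  exact (exists_nearest_mem_monoCone n x).choose_spec

theorem sum_sub_isoProj_mul_nonpos {n : ℕ} (x : EuclideanSpace ℝ (Fin n)) {c : Fin n → ℝ}
    (hc : ∀ a b, a ≤ b → isoProj x a = isoProj x b → c a ≤ c b) :
    ∑ j, (x j - isoProj x j) * c j ≤ 0 := by
  obtain ⟨hp, hmin⟩ := isoProj_spec x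
  obtain ⟨t, hmono, ht⟩ :=
    ((eventually_monotone_add_smul (fun a b hab => hp a b hab) hc).and self_mem_nhdsWithin).exists
  have h := inner_sub_le_zero_of_add_smul_mem (convex_monoCone n) hp hmin (c := WithLp.toLp 2 c)
    ht fun a b hab => by simpa using hmono hab
  simpa [PiLp.inner_apply, mul_comm] using h

theorem exists_right_in_block_apply_le_isoProj {n : ℕ} (x : EuclideanSpace ℝ (Fin n))
    (i : Fin n) : ∃ j, i ≤ j ∧ isoProj x j = isoProj x i ∧ x j ≤ isoProj x j := by
  classical
  set p := isoProj x
  have h := sum_sub_isoProj_mul_nonpos x (c := fun j => if i ≤ j ∧ p j = p i then 1 else 0)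
    fun a b hab hpab => by
      by_cases ha : i ≤ a ∧ p a = p i
      · rw [if_pos ha, if_pos ⟨ha.1.trans hab, hpab ▸ ha.2⟩]
      · rw [if_neg ha]; split_ifs <;> norm_num
  simp only [mul_ite, mul_one, mul_zero, ← Finset.sum_filter] at h
  obtain ⟨j, hj, hle⟩ := Finset.exists_le_of_sum_le ⟨i, by simp⟩ (h.trans Finset.sum_const_zero.ge)
  simp only [Finset.mem_filter, Finset.mem_univ, true_and] at hj
  exact ⟨j, hj.1, hj.2, by simpa [sub_nonpos] using hle⟩

theorem exists_left_in_block_isoProj_le_apply {n : ℕ} (x : EuclideanSpace ℝ (Fin n))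
    (i : Fin n) : ∃ j, j ≤ i ∧ isoProj x j = isoProj x i ∧ isoProj x j ≤ x j := by
  classical
  set p := isoProj x
  have h := sum_sub_isoProj_mul_nonpos x (c := fun j => if j ≤ i ∧ p j = p i then -1 else 0)
    fun a b hab hpab => by
      by_cases hb : b ≤ i ∧ p b = p i
      · rw [if_pos hb, if_pos ⟨hab.trans hb.1, hpab.trans hb.2⟩]
      · rw [if_neg hb]; split_ifs <;> norm_num
  simp only [mul_ite, mul_neg, mul_one, mul_zero, ← Finset.sum_filter] at h
  obtain ⟨j, hj, hle⟩ := Finset.exists_le_of_sum_le ⟨i, by simp⟩ (h.trans Finset.sum_const_zero.ge)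
  simp only [Finset.mem_filter, Finset.mem_univ, true_and] at hj
  exact ⟨j, hj.1, hj.2, by simpa [sub_nonneg] using hle⟩

theorem stmt10_general (n : ℕ) (x : EuclideanSpace ℝ (Fin n)) (ε : ℝ)
    (hmono : ∀ i j : Fin n, i ≤ j → x i ≤ x j + ε) :
    ∀ i : Fin n, |x i - isoProj x i| ≤ ε := by
  intro i
  obtain ⟨j, hij, hpj, hxj⟩ := exists_right_in_block_apply_le_isoProj x i
  obtain ⟨k, hki, hpk, hxk⟩ := exists_left_in_block_isoProj_le_apply x i
  rw [abs_le]
  constructor <;> linarith [hmono i j hij, hmono k i hki]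

theorem stmt10 (n : ℕ) (x : EuclideanSpace ℝ (Fin n)) (ε : ℝ) (hε : 0 ≤ ε)
    (hmono : ∀ i j : Fin n, i ≤ j → x i ≤ x j + ε) :
    ∀ i : Fin n, |x i - isoProj x i| ≤ ε :=
  stmt10_general n x ε hmono
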